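/- (Lemma 1, shattering form.) Let Π be a family of deterministic stopping policies with VC dimension at most d (as Boolean classifiers on List O), d ≥ 1, let g : List O → ℝ be a reward function, and let 𝓗 = { I(π, Δ) : π ∈ Π, Δ ∈ ℝ } be the associated indicator class on full trajectories, where I(π, Δ)(x) = true iff R_π(x) ≥ Δ. If 𝓗 shatters a set of n full trajectories of horizon H with n·H ≥ d, then 2^n ≤ (n·H + 1)·(e·n·H/d)^d. -/

import Mathlib

open scoped BigOperators

/-- The `t`-prefix of a full trajectory `x : Fin H → O`, i.e. the list `[x 0, …, x (t-1)]`. -/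
def trajPrefix {O : Type*} {H : ℕ} (x : Fin H → O) (t : ℕ) : List O :=
  (List.ofFn x).take t

open Classical in
/-- The stopping time of policy `π` on full trajectory `x`: the least `t` with
`1 ≤ t ≤ H` such that `π` halts on the `t`-prefix of `x`, and `H` if no such `t` exists. -/
noncomputable def stopTime {O : Type*} (H : ℕ) (π : List O → Bool) (x : Fin H → O) : ℕ :=
  if h : ∃ t, (1 ≤ t ∧ t ≤ H) ∧ π (trajPrefix x t) = true then Nat.find h else H

/-- The return of policy `π` on full trajectory `x` under reward function `g`. -/
noncomputable def policyReturn {O : Type*} {H : ℕ} (g : List O → ℝ) (π : List O → Bool)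
    (x : Fin H → O) : ℝ :=
  g (trajPrefix x (stopTime H π x))

/-- A family `Π` of policies shatters a finite set `S` of lists if every Boolean
labeling of `S` is realized by some member of `Π`. -/
def ShattersLists {O : Type*} (P : Set (List O → Bool)) (S : Finset (List O)) : Prop :=
  ∀ f : List O → Bool, ∃ π ∈ P, ∀ l ∈ S, π l = f l

/-!
The return of a policy on the `n` trajectories depends only on its values on the at most `n·H`
prefixes of those trajectories. Hence a labeling realized by `(π, Δ)` is determined by the trace
of `π` on this prefix set together with the number of trajectories labeled `true`: for a fixed
trace the realizable labelings are threshold sets of one real vector, so they are nested. By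
Sauer–Shelah there are at most `∑_{k ≤ d} C(nH, k) ≤ (e·nH/d)^d` traces.
-/

open Finset

section SauerShelah

variable {α : Type*}

lemma Finset.card_shatterer_le_sum_vcDim_of_forall_subset [DecidableEq α]
    {𝒜 : Finset (Finset α)} {S : Finset α} (h𝒜 : ∀ t ∈ 𝒜, t ⊆ S) :
    #𝒜.shatterer ≤ ∑ k ∈ Iic 𝒜.vcDim, (#S).choose k := by
  simp_rw [← card_powersetCard]
  refine (card_le_card fun s hs ↦ mem_biUnion.2 ⟨#s, ?_⟩).trans card_biUnion_le
  obtain ⟨t, ht, hst⟩ := (mem_shatterer.1 hs).exists_superset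
  exact ⟨mem_Iic.2 (mem_shatterer.1 hs).card_le_vcDim,
    mem_powersetCard.2 ⟨hst.trans (h𝒜 t ht), rfl⟩⟩

open Classical in
noncomputable def traceFamily (P : Set (α → Bool)) (S : Finset α) : Finset (Finset α) :=
  {T ∈ S.powerset | ∃ p ∈ P, {l ∈ S | p l} = T}

lemma mem_traceFamily {P : Set (α → Bool)} {S T : Finset α} :
    T ∈ traceFamily P S ↔ ∃ p ∈ P, {l ∈ S | p l} = T := by
  classical
  simp only [traceFamily, mem_filter, mem_powerset, and_iff_right_iff_imp]
  rintro ⟨p, -, rfl⟩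
  exact filter_subset _ _

lemma subset_of_mem_traceFamily {P : Set (α → Bool)} {S T : Finset α}
    (hT : T ∈ traceFamily P S) : T ⊆ S := by
  obtain ⟨p, -, rfl⟩ := mem_traceFamily.1 hT
  exact filter_subset _ _

lemma shattersLists_of_shatters_traceFamily {O : Type*} [DecidableEq (List O)]
    {P : Set (List O → Bool)} {S T : Finset (List O)} (hT : (traceFamily P S).Shatters T) :
    ShattersLists P T := by
  intro f
  obtain ⟨u, hu, hTu⟩ := hT (filter_subset (fun l ↦ f l) T)
  obtain ⟨p, hp, rfl⟩ := mem_traceFamily.1 hu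
  obtain ⟨v, hv, hTv⟩ := hT.exists_superset
  have hTS : T ⊆ S := hTv.trans (subset_of_mem_traceFamily hv)
  refine ⟨p, hp, fun l hl ↦ Bool.eq_iff_iff.2 ?_⟩
  simpa [hl, hTS hl] using congrArg (l ∈ ·) hTu

lemma vcDim_traceFamily_le {O : Type*} [DecidableEq (List O)] {P : Set (List O → Bool)} {d : ℕ}
    (hVC : ∀ T : Finset (List O), #T = d + 1 → ¬ ShattersLists P T) (S : Finset (List O)) :
    (traceFamily P S).vcDim ≤ d := by
  refine Finset.sup_le fun T hT ↦ ?_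
  by_contra! hdT
  obtain ⟨T', hT'T, hT'⟩ := exists_subset_card_eq (show d + 1 ≤ #T by omega)
  exact hVC T' hT' (shattersLists_of_shatters_traceFamily ((mem_shatterer.1 hT).mono_right hT'T))

lemma card_traceFamily_le_sum_choose {O : Type*} {P : Set (List O → Bool)} {d : ℕ}
    (hVC : ∀ T : Finset (List O), #T = d + 1 → ¬ ShattersLists P T) (S : Finset (List O)) :
    #(traceFamily P S) ≤ ∑ k ∈ Iic d, (#S).choose k := by
  classical
  calc #(traceFamily P S) ≤ #(traceFamily P S).shatterer := card_le_card_shatterer _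
    _ ≤ ∑ k ∈ Iic (traceFamily P S).vcDim, (#S).choose k :=
      card_shatterer_le_sum_vcDim_of_forall_subset fun _ ↦ subset_of_mem_traceFamily
    _ ≤ ∑ k ∈ Iic d, (#S).choose k :=
      sum_le_sum_of_subset (Iic_subset_Iic.2 (vcDim_traceFamily_le hVC S))

end SauerShelah

section Thresholds

variable {ι : Type*} [Fintype ι]

lemma threshold_labeling_eq_of_card_eq {r : ι → ℝ} {b c : ι → Bool} {Δ Δ' : ℝ}
    (hb : ∀ i, b i = true ↔ Δ ≤ r i) (hc : ∀ i, c i = true ↔ Δ' ≤ r i)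
    (hcard : #{i | b i} = #{i | c i}) : b = c := by
  wlog hΔ : Δ ≤ Δ' generalizing b c Δ Δ'
  · exact (this hc hb hcard.symm (le_of_not_ge hΔ)).symm
  have hcb : ({i | c i} : Finset ι) ⊆ ({i | b i} : Finset ι) := by
    intro i
    simp only [mem_filter, mem_univ, true_and, hb, hc]
    exact hΔ.trans
  have hbc := eq_of_subset_of_card_le hcb hcard.le
  funext i
  simpa using congrArg (i ∈ ·) hbc.symm

lemma two_pow_card_le_card_traceFamily_mul {α : Type*} (P : Set (α → Bool)) (S : Finset α)
    (R : (α → Bool) → ι → ℝ) (hR : ∀ p q, (∀ l ∈ S, p l = q l) → R p = R q)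
    (hshatter : ∀ b : ι → Bool, ∃ p ∈ P, ∃ Δ : ℝ, ∀ i, (b i = true ↔ Δ ≤ R p i)) :
    2 ^ Fintype.card ι ≤ #(traceFamily P S) * (Fintype.card ι + 1) := by
  classical
  choose p hpP Δ hΔ using hshatter
  let code : (ι → Bool) → Finset α × ℕ := fun b ↦ ({l ∈ S | p b l}, #{i | b i})
  have hcode : ∀ b, code b ∈ traceFamily P S ×ˢ range (Fintype.card ι + 1) := fun b ↦
    mem_product.2 ⟨mem_traceFamily.2 ⟨p b, hpP b, rfl⟩,
      mem_range.2 (Nat.lt_succ_of_le (card_filter_le _ _))⟩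
  have hcode_inj : Function.Injective code := by
    intro b c hbc
    simp only [code, Prod.ext_iff] at hbc
    have hpS : ∀ l ∈ S, p b l = p c l := fun l hl ↦ Bool.eq_iff_iff.2 <| by
      simpa [hl] using congrArg (l ∈ ·) hbc.1
    exact threshold_labeling_eq_of_card_eq (hΔ b) (hR _ _ hpS ▸ hΔ c) hbc.2
  simpa [card_product, Fintype.card_fun] using
    card_le_card_of_injOn (s := univ) code (fun b _ ↦ hcode b) hcode_inj.injOn

end Thresholds

section Trajectories

variable {O : Type*} {H : ℕ}

lemma stopTime_congr {π π' : List O → Bool} {x : Fin H → O}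
    (h : ∀ t, 1 ≤ t → t ≤ H → π (trajPrefix x t) = π' (trajPrefix x t)) :
    stopTime H π x = stopTime H π' x := by
  have hiff : ∀ {t}, ((1 ≤ t ∧ t ≤ H) ∧ π (trajPrefix x t) = true) ↔
      ((1 ≤ t ∧ t ≤ H) ∧ π' (trajPrefix x t) = true) :=
    and_congr_right fun ht ↦ by rw [h _ ht.1 ht.2]
  unfold stopTime
  by_cases hex : ∃ t, (1 ≤ t ∧ t ≤ H) ∧ π (trajPrefix x t) = true
  · rw [dif_pos hex, dif_pos (exists_congr (fun _ ↦ hiff) |>.1 hex)]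
    exact Nat.find_congr' hiff
  · rw [dif_neg hex, dif_neg (exists_congr (fun _ ↦ hiff) |>.not.1 hex)]

lemma policyReturn_congr (g : List O → ℝ) {π π' : List O → Bool} {x : Fin H → O}
    (h : ∀ t, 1 ≤ t → t ≤ H → π (trajPrefix x t) = π' (trajPrefix x t)) :
    policyReturn g π x = policyReturn g π' x := by
  rw [policyReturn, policyReturn, stopTime_congr h]

variable {ι : Type*} [Fintype ι]

open Classical in
noncomputable def prefixSet (x : ι → Fin H → O) : Finset (List O) :=
  univ.image fun p : ι × Fin H ↦ trajPrefix (x p.1) (p.2 + 1)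

lemma trajPrefix_mem_prefixSet (x : ι → Fin H → O) (i : ι) {t : ℕ} (ht₁ : 1 ≤ t)
    (ht₂ : t ≤ H) :
    trajPrefix (x i) t ∈ prefixSet x := by
  classical
  refine mem_image.2 ⟨(i, ⟨t - 1, by omega⟩), mem_univ _, ?_⟩
  simp only [Nat.sub_add_cancel ht₁]

lemma card_prefixSet_le (x : ι → Fin H → O) : #(prefixSet x) ≤ Fintype.card ι * H := by
  classical
  unfold prefixSet
  exact card_image_le.trans (by simp)

end Trajectories

lemma sum_choose_le_exp_mul_div_pow {d m : ℕ} (hdm : d ≤ m) :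
    ∑ k ∈ Iic d, (m.choose k : ℝ) ≤ (Real.exp 1 * m / d) ^ d := by
  rcases Nat.eq_zero_or_pos d with rfl | hd
  · rw [show Iic 0 = {0} from rfl]; simp
  have hm : (0 : ℝ) < m := by exact_mod_cast hd.trans_le hdm
  set r : ℝ := d / m
  have hr₀ : 0 < r := by positivity
  have hr₁ : r ≤ 1 := div_le_one_of_le₀ (by exact_mod_cast hdm) hm.le
  -- Chernoff-style: weight the `k`-th term by `r ^ k ≥ r ^ d` and complete the binomial sum.
  have hweighted : (∑ k ∈ Iic d, (m.choose k : ℝ)) * r ^ d ≤ Real.exp 1 ^ d :=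
    calc (∑ k ∈ Iic d, (m.choose k : ℝ)) * r ^ d
        ≤ ∑ k ∈ Iic d, (m.choose k : ℝ) * r ^ k := by
          rw [sum_mul]
          refine sum_le_sum fun k hk ↦ mul_le_mul_of_nonneg_left ?_ (by positivity)
          exact pow_le_pow_of_le_one hr₀.le hr₁ (mem_Iic.1 hk)
      _ ≤ ∑ k ∈ range (m + 1), (m.choose k : ℝ) * r ^ k := by
          refine sum_le_sum_of_subset_of_nonneg (fun k hk ↦ ?_) fun _ _ _ ↦ by positivity
          exact mem_range.2 (Nat.lt_succ_of_le ((mem_Iic.1 hk).trans hdm))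
      _ = (1 + r) ^ m := by
          rw [add_comm 1 r, add_pow]
          simp only [one_pow, mul_one, mul_comm]
      _ ≤ Real.exp r ^ m := by gcongr; linarith [Real.add_one_le_exp r]
      _ = Real.exp 1 ^ d := by
          rw [← Real.exp_nat_mul, ← Real.exp_nat_mul, mul_one,
            show (m : ℝ) * r = d from mul_div_cancel₀ _ hm.ne']
  rwa [show Real.exp 1 * m / d = Real.exp 1 / r by simp only [r]; field_simp, div_pow,
    le_div_iff₀ (by positivity)]

theorem shatter_bound_general {O : Type*} {H n d : ℕ} (hH : 1 ≤ H)
    (P : Set (List O → Bool))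
    (hVC : ∀ S : Finset (List O), S.card = d + 1 → ¬ ShattersLists P S)
    (g : List O → ℝ)
    (x : Fin n → (Fin H → O)) (hnH : d ≤ n * H)
    (hshatter : ∀ b : Fin n → Bool, ∃ π ∈ P, ∃ Δ : ℝ,
        ∀ i : Fin n, (b i = true ↔ Δ ≤ policyReturn g π (x i))) :
    (2 : ℝ) ^ n ≤ ((n : ℝ) * H + 1) * (Real.exp 1 * n * H / d) ^ d := by
  set S := prefixSet x
  have hcount : 2 ^ n ≤ #(traceFamily P S) * (n + 1) := by
    simpa using two_pow_card_le_card_traceFamily_mul P S (fun π i ↦ policyReturn g π (x i))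
      (fun π π' hS ↦ funext fun i ↦ policyReturn_congr g fun t ht₁ ht₂ ↦
        hS _ (trajPrefix_mem_prefixSet x i ht₁ ht₂)) hshatter
  have htraces : #(traceFamily P S) ≤ ∑ k ∈ Iic d, (n * H).choose k :=
    (card_traceFamily_le_sum_choose hVC S).trans <| sum_le_sum fun k _ ↦
      Nat.choose_le_choose k (by simpa using card_prefixSet_le x)
  have hbinom := sum_choose_le_exp_mul_div_pow hnH
  rw [Nat.cast_mul, ← mul_assoc] at hbinom
  calc (2 : ℝ) ^ n ≤ (∑ k ∈ Iic d, ((n * H).choose k : ℝ)) * (n + 1) := by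
        exact_mod_cast hcount.trans (Nat.mul_le_mul_right _ htraces)
    _ ≤ (Real.exp 1 * n * H / d) ^ d * (n * H + 1) := by
        gcongr
        exact le_mul_of_one_le_right n.cast_nonneg (by exact_mod_cast hH)
    _ = _ := mul_comm _ _

/-- Lemma 1 (shattering form): if the indicator class `𝓗 = {I(π, Δ)}` associated with a
VC-dimension-`d` policy class shatters a set of `n` full trajectories of horizon `H` with
`n·H ≥ d`, then `2^n ≤ (n·H + 1)·(e·n·H/d)^d`. -/
theorem shatter_bound {O : Type*} {H n d : ℕ} (hH : 1 ≤ H) (hd : 1 ≤ d)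
    (P : Set (List O → Bool))
    (hVC : ∀ S : Finset (List O), S.card = d + 1 → ¬ ShattersLists P S)
    (g : List O → ℝ)
    (x : Fin n → (Fin H → O)) (hinj : Function.Injective x) (hnH : d ≤ n * H)
    (hshatter : ∀ b : Fin n → Bool, ∃ π ∈ P, ∃ Δ : ℝ,
        ∀ i : Fin n, (b i = true ↔ Δ ≤ policyReturn g π (x i))) :
    (2 : ℝ) ^ n ≤ ((n : ℝ) * H + 1) * (Real.exp 1 * n * H / d) ^ d :=
  shatter_bound_general hH P hVC g x hnH hshatter
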